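/- Let h : (0, 2π) → ℝ be defined by h(y) = (sin(y/2))^{1/3}. Then for every y ∈ (0, 2π), h is twice differentiable at y and 3·h''(y) + cot(y/2)·h'(y) = −(1/4)·h(y). Equivalently, the function f(t,y) = e^{−t/4}·(sin(y/2))^{1/3} satisfies ∂_t f(t,y) = 3·∂²_y f(t,y) + cot(y/2)·∂_y f(t,y) for all t ∈ ℝ and y ∈ (0, 2π). -/

import Mathlib

/-!
With `s = sin (y/2)`, the operator `L = 3 ∂² + cot (y/2) ∂` sends `s^p` to
`-(3p/4) s^p + p(3p-1)/4 · cos² (y/2) · s^(p-2)`. The cross term vanishes exactly for `p = 1/3`,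
leaving the eigenvalue `-1/4`, and the time factor `e^(-t/4)` turns `L h = -h/4` into `∂_t f = L f`.
-/

open Real

section SinHalfRpow

variable {y : ℝ}

lemma sin_half_pos_of_mem_Ioo (hy : y ∈ Set.Ioo 0 (2 * π)) : 0 < sin (y / 2) :=
  sin_pos_of_pos_of_lt_pi (by linarith [hy.1]) (by linarith [hy.2])

lemma hasDerivAt_sin_half_rpow (p : ℝ) (hs : 0 < sin (y / 2)) :
    HasDerivAt (fun y => sin (y / 2) ^ p) (p / 2 * cos (y / 2) * sin (y / 2) ^ (p - 1)) y := by
  have hsin : HasDerivAt (fun y => sin (y / 2)) (cos (y / 2) * (1 / 2)) y :=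
    ((hasDerivAt_id y).div_const 2).sin
  convert hsin.rpow_const (p := p) (Or.inl hs.ne') using 1
  ring

lemma hasDerivAt_deriv_sin_half_rpow (p : ℝ) (hy : y ∈ Set.Ioo 0 (2 * π)) :
    HasDerivAt (deriv fun y => sin (y / 2) ^ p)
      (p / 2 * (-(1 / 2) * sin (y / 2) ^ p + (p - 1) / 2 * cos (y / 2) ^ 2 * sin (y / 2) ^ (p - 2)))
      y := by
  have hs := sin_half_pos_of_mem_Ioo hy
  have hderiv : (deriv fun y => sin (y / 2) ^ p)
      =ᶠ[nhds y] fun y => p / 2 * cos (y / 2) * sin (y / 2) ^ (p - 1) := by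
    filter_upwards [isOpen_Ioo.mem_nhds hy] with z hz
    exact (hasDerivAt_sin_half_rpow p (sin_half_pos_of_mem_Ioo hz)).deriv
  have half : HasDerivAt (fun y : ℝ => y / 2) (1 / 2) y := (hasDerivAt_id y).div_const 2
  have hpow := half.sin.rpow_const (p := p - 1) (Or.inl hs.ne')
  refine (((half.cos.const_mul (p / 2)).mul hpow).congr_of_eventuallyEq hderiv).congr_deriv ?_
  have hp : sin (y / 2) ^ p = sin (y / 2) * sin (y / 2) ^ (p - 1) := by
    rw [rpow_sub_one hs.ne']; field_simp
  rw [hp, show p - 1 - 1 = p - 2 by ring]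
  ring

lemma generator_sin_half_rpow (p : ℝ) (hy : y ∈ Set.Ioo 0 (2 * π)) :
    3 * deriv (deriv fun y => sin (y / 2) ^ p) y + cot (y / 2) * deriv (fun y => sin (y / 2) ^ p) y
      = -(3 * p / 4) * sin (y / 2) ^ p
        + p * (3 * p - 1) / 4 * cos (y / 2) ^ 2 * sin (y / 2) ^ (p - 2) := by
  have hs := sin_half_pos_of_mem_Ioo hy
  rw [(hasDerivAt_deriv_sin_half_rpow p hy).deriv, (hasDerivAt_sin_half_rpow p hs).deriv,
    cot_eq_cos_div_sin, show p - 2 = p - 1 - 1 by ring, rpow_sub_one hs.ne' (p - 1)]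
  field_simp
  ring

end SinHalfRpow

/-- The function `h(y) = (sin(y/2))^(1/3)` is, on `(0, 2π)`, a twice differentiable
eigenfunction of the generator `L = 3 ∂² + cot(y/2) ∂` with eigenvalue `-1/4`; equivalently,
`f(t,y) = e^(−t/4) (sin(y/2))^(1/3)` satisfies `∂_t f = 3 ∂²_y f + cot(y/2) ∂_y f`. -/
theorem stmt_4
    (h : ℝ → ℝ) (hdef : h = fun y => Real.sin (y / 2) ^ ((1 : ℝ) / 3))
    (f : ℝ → ℝ → ℝ)
    (fdef : f = fun t y => Real.exp (-t / 4) * Real.sin (y / 2) ^ ((1 : ℝ) / 3)) :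
    (∀ y ∈ Set.Ioo (0 : ℝ) (2 * Real.pi),
      DifferentiableAt ℝ h y ∧ DifferentiableAt ℝ (deriv h) y ∧
      3 * deriv (deriv h) y + Real.cot (y / 2) * deriv h y = -(1 / 4) * h y) ∧
    (∀ t : ℝ, ∀ y ∈ Set.Ioo (0 : ℝ) (2 * Real.pi),
      deriv (fun t' => f t' y) t =
        3 * deriv (deriv fun y' => f t y') y + Real.cot (y / 2) * deriv (fun y' => f t y') y) := by
  subst hdef fdef
  have eigen (y : ℝ) (hy : y ∈ Set.Ioo 0 (2 * π)) :
      3 * deriv (deriv fun y => sin (y / 2) ^ ((1 : ℝ) / 3)) y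
          + cot (y / 2) * deriv (fun y => sin (y / 2) ^ ((1 : ℝ) / 3)) y
        = -(1 / 4) * sin (y / 2) ^ ((1 : ℝ) / 3) := by
    rw [generator_sin_half_rpow _ hy]
    norm_num
  refine ⟨fun y hy => ⟨(hasDerivAt_sin_half_rpow _ (sin_half_pos_of_mem_Ioo hy)).differentiableAt,
    (hasDerivAt_deriv_sin_half_rpow _ hy).differentiableAt, eigen y hy⟩, fun t y hy => ?_⟩
  have hexp : HasDerivAt (fun t => exp (-t / 4)) (exp (-t / 4) * (-1 / 4)) t :=
    ((hasDerivAt_neg t).div_const 4).exp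
  rw [(hexp.mul_const _).deriv, deriv_const_mul_field', deriv_const_mul_field']
  linear_combination -exp (-t / 4) * eigen y hy
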